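/- arXiv:1610.06735 — 5 statements merged into one kernel-verified Lean document; each statement's English description precedes it below -/
import Mathlib

section
/- For n ≥ 4, every permutation of {1, ..., n} that is not a derangement and not the identity can be written as a product of two derangements; consequently the derangement graph Γ_n has diameter 2. -/
/-- The derangement graph: vertices are permutations of `{1,...,n}`, with `u` adjacent to `v`
iff `v * u⁻¹` is a derangement. -/
def derangementGraph (n : ℕ) : SimpleGraph (Equiv.Perm (Fin n)) where
  Adj u v := u ≠ v ∧ v * u⁻¹ ∈ derangements (Fin n)
  symm := ⟨by
    rintro u v ⟨hne, hd⟩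
    refine ⟨hne.symm, fun x hx => hd x ?_⟩
    have h1 : u * v⁻¹ = (v * u⁻¹)⁻¹ := by group
    rw [h1] at hx
    have := congrArg (v * u⁻¹) hx
    simpa using this.symm⟩
  loopless := ⟨fun u h => h.1 rfl⟩

open Finset

/-- Key lemma: for `n ≥ 4` and any `w`, there is a derangement `d` with `w * d` a derangement. -/
lemma exists_derangement_mul (n : ℕ) (hn : 4 ≤ n) (w : Equiv.Perm (Fin n)) :
    ∃ d ∈ derangements (Fin n), w * d ∈ derangements (Fin n) := by
  classical
  set t : Fin n → Finset (Fin n) := fun x => Finset.univ \ {x, w⁻¹ x} with ht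
  have hcard : ∀ x, n - 2 ≤ (t x).card := by
    intro x
    have h1 : ({x, w⁻¹ x} : Finset (Fin n)).card ≤ 2 := card_insert_le _ _ |>.trans (by simp)
    have := Finset.le_card_sdiff ({x, w⁻¹ x}) Finset.univ
    have h2 : (Finset.univ : Finset (Fin n)).card = n := by simp
    simp only [ht]
    omega
  have hall : ∀ s : Finset (Fin n), s.card ≤ (s.biUnion t).card := by
    intro s
    rcases s.eq_empty_or_nonempty with rfl | ⟨x0, hx0⟩
    · simp
    by_cases hs : s.card ≤ n - 2
    · refine hs.trans ?_
      exact (hcard x0).trans (Finset.card_le_card (Finset.subset_biUnion_of_mem t hx0))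
    · -- s.card ≥ n - 1 ≥ 3, show the biUnion is everything
      have hs3 : 3 ≤ s.card := by
        have : s.card ≤ n := by
          simpa using Finset.card_le_card (Finset.subset_univ s)
        omega
      have huniv : s.biUnion t = Finset.univ := by
        apply Finset.eq_univ_of_forall
        intro y
        by_contra hy
        simp only [Finset.mem_biUnion, not_exists, not_and] at hy
        have hsub : s ⊆ {y, w y} := by
          intro x hx
          have := hy x hx
          simp only [ht, Finset.mem_sdiff, Finset.mem_univ, true_and, not_not,
            Finset.mem_insert, Finset.mem_singleton] at this
          rcases this with h | h
          · simp [h]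
          · have : x = w y := by
              have := congrArg w h
              simpa using this.symm
            simp [this]
        have := Finset.card_le_card hsub
        have h2 : ({y, w y} : Finset (Fin n)).card ≤ 2 := card_insert_le _ _ |>.trans (by simp)
        omega
      rw [huniv]
      simpa using Finset.card_le_card (Finset.subset_univ s)
  obtain ⟨f, hfinj, hf⟩ := (Finset.all_card_le_biUnion_card_iff_exists_injective t).mp hall
  have hbij : Function.Bijective f := Finite.injective_iff_bijective.mp hfinj
  set d := Equiv.ofBijective f hbij with hd
  have hdx : ∀ x, d x ≠ x ∧ d x ≠ w⁻¹ x := by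
    intro x
    have := hf x
    simp only [ht, Finset.mem_sdiff, Finset.mem_univ, true_and, Finset.mem_insert,
      Finset.mem_singleton, not_or] at this
    exact this
  refine ⟨d, fun x => (hdx x).1, fun x => ?_⟩
  intro h
  have : d x = w⁻¹ x := by
    have := congrArg (fun y => w⁻¹ y) h
    simpa using this
  exact (hdx x).2 this

lemma inv_mem_derangements {n : ℕ} {d : Equiv.Perm (Fin n)} (h : d ∈ derangements (Fin n)) :
    d⁻¹ ∈ derangements (Fin n) := by
  intro x hx
  exact h x (by simpa using (congrArg (fun y => d y) hx).symm)

lemma derangement_ne_one {n : ℕ} (hn : 4 ≤ n) {d : Equiv.Perm (Fin n)}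
    (h : d ∈ derangements (Fin n)) : d ≠ 1 := by
  intro h1
  exact h ⟨0, by omega⟩ (by rw [h1]; rfl)

lemma two_le_enat (x : ℕ∞) (h0 : x ≠ 0) (h1 : x ≠ 1) : 2 ≤ x := by
  cases x with
  | top => exact le_top
  | coe m =>
    have h0' : m ≠ 0 := by simpa using h0
    have h1' : m ≠ 1 := by simpa using h1
    exact_mod_cast (by omega : 2 ≤ m)

/-- For `n ≥ 4`, every non-identity non-derangement permutation is a product of two
derangements, and consequently the derangement graph has diameter 2. -/
theorem derangementGraph_diam_two (n : ℕ) (hn : 4 ≤ n) :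
    (∀ w : Equiv.Perm (Fin n), w ∉ derangements (Fin n) → w ≠ 1 →
        ∃ u ∈ derangements (Fin n), ∃ v ∈ derangements (Fin n), w = u * v) ∧
    (derangementGraph n).diam = 2 := by
  classical
  have hprod : ∀ w : Equiv.Perm (Fin n),
      ∃ u ∈ derangements (Fin n), ∃ v ∈ derangements (Fin n), w = u * v := by
    intro w
    obtain ⟨d, hd, hwd⟩ := exists_derangement_mul n hn w
    exact ⟨w * d, hwd, d⁻¹, inv_mem_derangements hd, by group⟩
  refine ⟨fun w _ _ => hprod w, ?_⟩
  -- every pair is at edist ≤ 2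
  have hle2 : ∀ u v : Equiv.Perm (Fin n), (derangementGraph n).edist u v ≤ 2 := by
    intro u v
    by_cases huv : u = v
    · subst huv; simp [SimpleGraph.edist_self]
    · obtain ⟨u', hu', v', hv', hw⟩ := hprod (v * u⁻¹)
      have hadj1 : (derangementGraph n).Adj u (v' * u) := by
        refine ⟨fun h => derangement_ne_one hn hv' ?_, by simpa using hv'⟩
        have := mul_right_cancel (a := v') (b := u) (c := 1) (by rw [← h, one_mul])
        exact this
      have hadj2 : (derangementGraph n).Adj (v' * u) v := by
        have key : v * (v' * u)⁻¹ = u' := by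
          calc v * (v' * u)⁻¹ = (v * u⁻¹) * v'⁻¹ := by group
          _ = (u' * v') * v'⁻¹ := by rw [← hw]
          _ = u' := by group
        refine ⟨fun h => derangement_ne_one hn hu' ?_, by rw [key]; exact hu'⟩
        rw [h] at key
        simpa using key.symm
      exact le_trans (SimpleGraph.edist_le
        (SimpleGraph.Walk.cons hadj1 (SimpleGraph.Walk.cons hadj2 SimpleGraph.Walk.nil)))
        (by simp)
  -- a pair at edist exactly 2
  set a : Fin n := ⟨0, by omega⟩
  set b : Fin n := ⟨1, by omega⟩
  set c : Fin n := ⟨2, by omega⟩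
  have hab : a ≠ b := by simp [a, b, Fin.ext_iff]
  have hca : c ≠ a := by simp [a, c, Fin.ext_iff]
  have hcb : c ≠ b := by simp [b, c, Fin.ext_iff]
  set v0 : Equiv.Perm (Fin n) := Equiv.swap a b with hv0
  have hv0ne : (1 : Equiv.Perm (Fin n)) ≠ v0 := by
    intro h
    have : v0 a = a := by rw [← h]; rfl
    rw [hv0, Equiv.swap_apply_left] at this
    exact hab this.symm
  have hv0nd : v0 ∉ derangements (Fin n) := by
    intro hd
    exact hd c (Equiv.swap_apply_of_ne_of_ne hca hcb)
  have hnadj : ¬ (derangementGraph n).Adj 1 v0 := by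
    rintro ⟨-, hd⟩
    exact hv0nd (by simpa using hd)
  have h2le : 2 ≤ (derangementGraph n).edist 1 v0 := by
    apply two_le_enat
    · exact fun h => hv0ne (SimpleGraph.edist_eq_zero_iff.mp h)
    · exact fun h => hnadj (SimpleGraph.edist_eq_one_iff_adj.mp h)
  have hediam : (derangementGraph n).ediam = 2 :=
    le_antisymm (SimpleGraph.ediam_le_of_edist_le fun u v => hle2 u v)
      (h2le.trans SimpleGraph.edist_le_ediam)
  show ((derangementGraph n).ediam).toNat = 2
  rw [hediam]
  rfl
end

section
/- For n ≥ 4, every permutation of {1, ..., n} with exactly one fixed point is a product of two derangements. In particular, for n > 3 the n-cycle structure (1)(2 3 ⋯ n), i.e., the cyclic permutation of {2,...,n} fixing 1, is a product of two derangements of {1,...,n}. -/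
theorem aux_prod_two_derangements (n : ℕ) (hn : 4 ≤ n) (w : Equiv.Perm (Fin n)) :
    ∃ u ∈ derangements (Fin n), ∃ v ∈ derangements (Fin n), w = u * v := by
  classical
  have hall : ∀ A : Finset (Fin n),
      A.card ≤ (A.biUnion fun y => ({y, w y} : Finset (Fin n))ᶜ).card := by
    intro A
    rcases Nat.lt_or_ge A.card (n - 1) with h | h
    · rcases A.eq_empty_or_nonempty with rfl | ⟨y, hy⟩
      · simp
      · have h2 : ({y, w y} : Finset (Fin n)).card ≤ 2 := by
          apply le_trans (Finset.card_insert_le _ _); simp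
        have hc : n - 2 ≤ (({y, w y} : Finset (Fin n))ᶜ).card := by
          rw [Finset.card_compl, Fintype.card_fin]; omega
        have hsub : (({y, w y} : Finset (Fin n))ᶜ) ⊆
            A.biUnion fun y => ({y, w y} : Finset (Fin n))ᶜ :=
          Finset.subset_biUnion_of_mem (fun y => ({y, w y} : Finset (Fin n))ᶜ) hy
        have := Finset.card_le_card hsub
        omega
    · have huniv : (A.biUnion fun y => ({y, w y} : Finset (Fin n))ᶜ) = Finset.univ := by
        apply Finset.eq_univ_iff_forall.mpr
        intro c
        by_contra hc
        simp only [Finset.mem_biUnion, Finset.mem_compl, Finset.mem_insert,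
          Finset.mem_singleton, not_exists, not_and, not_not] at hc
        -- hc : ∀ y ∈ A, ¬(¬(y = c ∨ w y = c))  roughly
        have hA : A ⊆ ({c, w⁻¹ c} : Finset (Fin n)) := by
          intro y hy
          have := hc y hy
          simp only [Finset.mem_insert, Finset.mem_singleton]
          rcases this with h1 | h1
          · left; exact h1.symm
          · right; rw [h1]; simp
        have := Finset.card_le_card hA
        have h2 : ({c, w⁻¹ c} : Finset (Fin n)).card ≤ 2 := by
          apply le_trans (Finset.card_insert_le _ _); simp
        omega
      rw [huniv, Finset.card_univ, Fintype.card_fin]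
      exact le_trans (Finset.card_le_univ A) (by simp)
  obtain ⟨f, hinj, hf⟩ := (Finset.all_card_le_biUnion_card_iff_exists_injective
      (fun y : Fin n => ({y, w y} : Finset (Fin n))ᶜ)).mp hall
  let z : Equiv.Perm (Fin n) := Equiv.ofBijective f (Finite.injective_iff_bijective.mp hinj)
  have hz : ∀ y, z y ≠ y ∧ z y ≠ w y := by
    intro y
    have := hf y
    simp only [Finset.mem_compl, Finset.mem_insert, Finset.mem_singleton, not_or] at this
    exact ⟨this.1, this.2⟩
  refine ⟨w * z⁻¹, ?_, z, fun y => (hz y).1, by group⟩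
  intro x hx
  have : w (z⁻¹ x) = x := hx
  have h2 := (hz (z⁻¹ x)).2
  rw [show z (z⁻¹ x) = x from z.apply_symm_apply x] at h2
  exact h2 this.symm

/-- For `n ≥ 4`, every permutation of `{1,...,n}` with exactly one fixed point is a product
of two derangements; in particular, any cycle fixing exactly the point `0` (the analogue of
`(1)(2 3 ⋯ n)`) is a product of two derangements. -/
theorem one_fixed_point_prod_two_derangements (n : ℕ) (hn : 4 ≤ n) :
    (∀ w : Equiv.Perm (Fin n),
        (Finset.univ.filter fun x => w x = x).card = 1 →
        ∃ u ∈ derangements (Fin n), ∃ v ∈ derangements (Fin n), w = u * v) ∧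
    (∀ σ : Equiv.Perm (Fin n), σ.IsCycle →
        (∀ x : Fin n, σ x = x ↔ x = ⟨0, by omega⟩) →
        ∃ u ∈ derangements (Fin n), ∃ v ∈ derangements (Fin n), σ = u * v) :=
  ⟨fun w _ => aux_prod_two_derangements n hn w,
   fun σ _ _ => aux_prod_two_derangements n hn σ⟩
end

section
/- For n ≥ 4, every permutation of {1,...,n} with at least two fixed points is a product of two derangements. -/
open Finset

lemma exists_discordant (n : ℕ) (hn : 4 ≤ n) (w : Equiv.Perm (Fin n)) :
    ∃ v : Equiv.Perm (Fin n), ∀ y, v y ≠ y ∧ v y ≠ w y := by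
  classical
  set t : Fin n → Finset (Fin n) := fun y => univ.filter (fun z => z ≠ y ∧ z ≠ w y) with ht
  have hall : ∀ s : Finset (Fin n), s.card ≤ (s.biUnion t).card := by
    intro s
    rcases s.eq_empty_or_nonempty with rfl | ⟨y, hy⟩
    · simp
    by_cases hs : s.card ≤ 2
    · have hsub : t y ⊆ s.biUnion t := subset_biUnion_of_mem t hy
      have hcard : (({y, w y} : Finset (Fin n))ᶜ).card ≤ (t y).card := by
        apply card_le_card
        intro z hz
        simp only [mem_compl, mem_insert, mem_singleton, not_or] at hz
        simp [ht, hz.1, hz.2]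
      have h2 : (({y, w y} : Finset (Fin n)) : Finset (Fin n)).card ≤ 2 :=
        card_insert_le _ _ |>.trans (by simp)
      have : n - 2 ≤ (({y, w y} : Finset (Fin n))ᶜ).card := by
        rw [card_compl]
        simp only [Fintype.card_fin]
        omega
      have := card_le_card hsub
      omega
    · push_neg at hs
      have huniv : s.biUnion t = univ := by
        apply eq_univ_of_forall
        intro z
        have hsub : ¬ (s ⊆ ({z, w⁻¹ z} : Finset (Fin n))) := by
          intro h
          have := card_le_card h
          have h2 : (({z, w⁻¹ z} : Finset (Fin n))).card ≤ 2 :=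
            card_insert_le _ _ |>.trans (by simp)
          omega
        rw [Finset.not_subset] at hsub
        obtain ⟨y, hy, hy2⟩ := hsub
        simp only [mem_insert, mem_singleton, not_or] at hy2
        refine mem_biUnion.2 ⟨y, hy, ?_⟩
        simp only [ht, mem_filter, mem_univ, true_and]
        refine ⟨fun h => hy2.1 h.symm, fun h => hy2.2 ?_⟩
        have : w⁻¹ z = y := by rw [h]; exact w.symm_apply_apply y
        exact this.symm
      rw [huniv]
      simpa using card_le_univ s
  obtain ⟨f, hfinj, hf⟩ := (Finset.all_card_le_biUnion_card_iff_exists_injective t).1 hall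
  have hbij : Function.Bijective f := Finite.injective_iff_bijective.1 hfinj
  refine ⟨Equiv.ofBijective f hbij, fun y => ?_⟩
  have := hf y
  simp only [ht, mem_filter] at this
  exact this.2

/-- For `n ≥ 4`, every permutation of `{1,...,n}` with at least two fixed points is a
product of two derangements. -/
theorem two_fixed_points_prod_two_derangements (n : ℕ) (hn : 4 ≤ n)
    (w : Equiv.Perm (Fin n))
    (hfix : 2 ≤ (Finset.univ.filter fun x => w x = x).card) :
    ∃ u ∈ derangements (Fin n), ∃ v ∈ derangements (Fin n), w = u * v := by
  obtain ⟨v, hv⟩ := exists_discordant n hn w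
  refine ⟨w * v⁻¹, ?_, v, fun y => (hv y).1, by group⟩
  intro x hx
  have h := (hv (v⁻¹ x)).2
  simp only [Equiv.Perm.mul_apply] at hx
  exact h ((Equiv.apply_symm_apply v x).trans hx.symm)
end

section
/- For 4 ≤ i ≤ n/2, D_{i-1} + D_{i-2} + D_{i-3} − (n+1−i)·(D_{i-2} + D_{i-3}) = D_{i-1} − ((n−i)/(i−2))·D_{i-1} < 0; equivalently, (i−2)(D_{i-1} + D_{i-2} + D_{i-3}) < (i−2)(n+1−i)(D_{i-2}+D_{i-3}) for 4 ≤ i ≤ n/2. -/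
/-- `D n` is the number of derangements (fixed-point-free permutations) of an `n`-element set. -/
def D (n : ℕ) : ℕ := Fintype.card (derangements (Fin n))

lemma D_eq (m : ℕ) : D m = numDerangements m :=
  card_derangements_fin_eq_numDerangements

lemma numDer_pos (k : ℕ) : 1 ≤ numDerangements (k + 2) := by
  induction k with
  | zero => simp [numDerangements]
  | succ k ih =>
      rw [show k + 1 + 2 = (k + 1) + 2 from rfl, numDerangements_add_two]
      nlinarith

/-- For `4 ≤ i ≤ n/2`:
`D_{i-1} + D_{i-2} + D_{i-3} − (n+1−i)(D_{i-2} + D_{i-3}) = D_{i-1} − ((n−i)/(i−2))·D_{i-1} < 0`;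
equivalently `(i−2)(D_{i-1} + D_{i-2} + D_{i-3}) < (i−2)(n+1−i)(D_{i-2} + D_{i-3})`. -/
theorem derangement_sum_inequality (n i : ℕ) (hi : 4 ≤ i) (hin : 2 * i ≤ n) :
    ((D (i-1) : ℚ) + D (i-2) + D (i-3) - ((n : ℚ) + 1 - i) * (D (i-2) + D (i-3)) =
        (D (i-1) : ℚ) - ((n : ℚ) - i) / ((i : ℚ) - 2) * D (i-1)) ∧
    ((D (i-1) : ℚ) - ((n : ℚ) - i) / ((i : ℚ) - 2) * D (i-1) < 0) ∧
    (((i : ℚ) - 2) * (D (i-1) + D (i-2) + D (i-3)) <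
        ((i : ℚ) - 2) * ((n : ℚ) + 1 - i) * (D (i-2) + D (i-3))) := by
  obtain ⟨k, rfl⟩ : ∃ k, i = k + 4 := ⟨i - 4, by omega⟩
  have h1 : k + 4 - 1 = k + 3 := by omega
  have h2 : k + 4 - 2 = k + 2 := by omega
  have h3 : k + 4 - 3 = k + 1 := by omega
  rw [h1, h2, h3, D_eq, D_eq, D_eq]
  have hrec : numDerangements (k + 3) =
      (k + 2) * (numDerangements (k + 1) + numDerangements (k + 2)) :=
    numDerangements_add_two (k + 1)
  have hpos := numDer_pos k
  set a : ℕ := numDerangements (k + 1)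
  set b : ℕ := numDerangements (k + 2)
  have hrecQ : (numDerangements (k + 3) : ℚ) = ((k : ℚ) + 2) * (a + b) := by
    rw [hrec]; push_cast; ring
  have hn : (2 * (k + 4) : ℚ) ≤ n := by exact_mod_cast hin
  have hb : (1 : ℚ) ≤ b := by exact_mod_cast hpos
  have ha : (0 : ℚ) ≤ a := by positivity
  have hk : (0 : ℚ) ≤ k := by positivity
  have hne : ((k : ℚ) + 4) - 2 ≠ 0 := by nlinarith
  push_cast
  refine ⟨?_, ?_, ?_⟩
  · rw [hrecQ]; field_simp; ring
  · rw [hrecQ]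
    rw [div_mul_eq_mul_div, sub_div' hne, div_neg_iff]
    right
    constructor
    · nlinarith
    · nlinarith
  · rw [hrecQ]; nlinarith
end

section
/- For n ≥ 9, n·(D_{n-3} + (−1)^n) < (n−1)(n−2)·D_{n-4}; that is, the distance eigenvalue γ_{(n-2,2)} = −2 − (n−1)/(n−3)·D_{n-2} is strictly smaller than γ_{(n-2,1^2)} = −2 + ((−1)^{n-1} − n·D_{n-3}). -/
set_option maxHeartbeats 1000000

lemma numD_pos (m : ℕ) : 1 ≤ numDerangements (m + 2) := by
  induction m with
  | zero => decide
  | succ k ih =>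
    rw [show k + 1 + 2 = k + 1 + 2 from rfl, numDerangements_add_two]
    nlinarith [Nat.zero_le (numDerangements (k + 1))]

/-- For `n ≥ 9`: `n·(D_{n-3} + (−1)^n) < (n−1)(n−2)·D_{n-4}`; that is, the distance eigenvalue
`γ_{(n-2,2)} = −2 − (n−1)/(n−3)·D_{n-2}` is strictly smaller than
`γ_{(n-2,1^2)} = −2 + ((−1)^{n-1} − n·D_{n-3})`. -/
theorem gamma_comparison (n : ℕ) (hn : 9 ≤ n) :
    ((n : ℤ) * (D (n - 3) + (-1) ^ n) < ((n : ℤ) - 1) * ((n : ℤ) - 2) * D (n - 4)) ∧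
    (-2 - ((n : ℚ) - 1) / ((n : ℚ) - 3) * D (n - 2) <
      -2 + ((-1) ^ (n - 1) - (n : ℚ) * D (n - 3))) := by
  obtain ⟨m, rfl⟩ : ∃ m, n = m + 9 := ⟨n - 9, by omega⟩
  have h3 : m + 9 - 3 = m + 6 := by omega
  have h4 : m + 9 - 4 = m + 5 := by omega
  have h2 : m + 9 - 2 = m + 7 := by omega
  have h1 : m + 9 - 1 = m + 8 := by omega
  simp only [D, card_derangements_fin_eq_numDerangements, h3, h4, h2, h1]
  have ha : 1 ≤ numDerangements (m + 5) := numD_pos (m + 3)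
  have hb : (numDerangements (m + 6) : ℤ) =
      (m + 6) * (numDerangements (m + 5) : ℤ) - (-1) ^ (m + 5) :=
    numDerangements_succ (m + 5)
  have hc : numDerangements (m + 7) =
      (m + 6) * (numDerangements (m + 5) + numDerangements (m + 6)) :=
    numDerangements_add_two (m + 5)
  have haI : (1 : ℤ) ≤ (numDerangements (m + 5) : ℤ) := by exact_mod_cast ha
  have haQ : (1 : ℚ) ≤ (numDerangements (m + 5) : ℚ) := by exact_mod_cast ha
  have hbQ : (numDerangements (m + 6) : ℚ) =
      (m + 6) * (numDerangements (m + 5) : ℚ) - (-1) ^ (m + 5) := by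
    exact_mod_cast hb
  have heI : ((-1 : ℤ) ^ m = 1 ∧ (-1 : ℚ) ^ m = 1) ∨
      ((-1 : ℤ) ^ m = -1 ∧ (-1 : ℚ) ^ m = -1) := by
    rcases Nat.even_or_odd m with h | h
    · exact Or.inl ⟨h.neg_one_pow, h.neg_one_pow⟩
    · exact Or.inr ⟨h.neg_one_pow, h.neg_one_pow⟩
  set A := numDerangements (m + 5) with hA
  set B := numDerangements (m + 6) with hB
  set C := numDerangements (m + 7) with hC
  clear_value A B C
  constructor
  · have hp9 : ((-1 : ℤ)) ^ (m + 9) = -(-1 : ℤ) ^ m := by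
      rw [pow_add]; norm_num
    have hp5 : ((-1 : ℤ)) ^ (m + 5) = -(-1 : ℤ) ^ m := by
      rw [pow_add]; norm_num
    rw [hp5] at hb
    push_cast
    rw [hp9, hb]
    have hm : (0 : ℤ) ≤ (m : ℤ) := Int.natCast_nonneg m
    have key : ((m : ℤ) + 9) * (((m : ℤ) + 6) * A) < ((m : ℤ) + 9 - 1) * ((m : ℤ) + 9 - 2) * A := by
      nlinarith [haI, hm, mul_nonneg hm (le_trans zero_le_one haI)]
    rcases heI with ⟨h, -⟩ | ⟨h, -⟩ <;> rw [h] <;> linarith [key]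
  · have hp8 : ((-1 : ℚ)) ^ (m + 8) = (-1 : ℚ) ^ m := by
      rw [pow_add]; norm_num
    have hp5 : ((-1 : ℚ)) ^ (m + 5) = -(-1 : ℚ) ^ m := by
      rw [pow_add]; norm_num
    rw [hp5] at hbQ
    have hm0 : (0 : ℚ) ≤ (m : ℚ) := Nat.cast_nonneg m
    have h6 : ((m : ℚ) + 9 - 3) ≠ 0 := by intro hX; linarith
    have hcQ : (C : ℚ) = ((m : ℚ) + 6) * ((A : ℚ) + (B : ℚ)) := by exact_mod_cast hc
    have hd : ((m : ℚ) + 9 - 1) / ((m : ℚ) + 9 - 3) * (C : ℚ) =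
        ((m : ℚ) + 8) * ((A : ℚ) + (B : ℚ)) := by
      rw [hcQ]; field_simp; ring
    push_cast
    rw [hd, hp8, hbQ]
    have hmQ : (0 : ℚ) ≤ (m : ℚ) := Nat.cast_nonneg m
    rcases heI with ⟨-, h⟩ | ⟨-, h⟩ <;> rw [h] <;> nlinarith [haQ, hmQ, mul_nonneg hmQ (le_trans zero_le_one haQ)]
end
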